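/- arXiv:1305.4722 — 3 statements merged into one kernel-verified Lean document; each statement's English description precedes it below -/
import Mathlib

section
/- Let 0 < σ̲² ≤ σ̄² be real numbers, define G : ℝ → ℝ by G(a) = (1/2)(σ̄²·a⁺ − σ̲²·a⁻), set β = σ̄²/σ̲² and γ = (β−1)/(β+1). Then for all a, α ∈ ℝ, G(a + γ·|α|) ≥ (1/2)·(G(a+α) + G(a−α)). -/
/-!
Since `max (-x) 0 = max x 0 - x`, `G x = ½ σ̲² x + ½ (σ̄² - σ̲²) x⁺`. The linear part contributes
`½ σ̲² a` to `G^α(a)` and `½ σ̲² (a + γ t)` to `G (a + γ t)`, where `t = |α|`, so it remains to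
compare the positive parts. Monotonicity and `1`-Lipschitz continuity of `x ↦ x⁺` give
`(a + t)⁺ + (a - t)⁺ ≤ 2 (a + γ t)⁺ + (1 - γ) t`, and `γ` is chosen precisely so that
`(σ̄² - σ̲²)(1 - γ) = 2 σ̲² γ`, i.e. the slack `(1 - γ) t` is paid for by the linear part.
-/

lemma max_add_zero_add_max_sub_zero_abs {R : Type*} [AddCommGroup R] [LinearOrder R]
    (a α : R) :
    max (a + α) 0 + max (a - α) 0 = max (a + |α|) 0 + max (a - |α|) 0 := by
  rcases abs_choice α with h | h <;> rw [h]
  rw [sub_neg_eq_add, ← sub_eq_add_neg, add_comm]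

section OrderedGroup

variable {R : Type*} [AddCommGroup R] [LinearOrder R] [IsOrderedAddMonoid R]

lemma max_neg_zero_eq_max_zero_sub (x : R) : max (-x) 0 = max x 0 - x := by
  rcases le_total x 0 with hx | hx
  · rw [max_eq_left (neg_nonneg.mpr hx), max_eq_right hx, zero_sub]
  · rw [max_eq_right (neg_nonpos.mpr hx), max_eq_left hx, sub_self]

lemma max_add_zero_le_max_zero_add {s : R} (x : R) (hs : 0 ≤ s) :
    max (x + s) 0 ≤ max x 0 + s :=
  max_le (add_le_add_left (le_max_left x 0) s) (add_nonneg (le_max_right x 0) hs)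

end OrderedGroup

lemma max_add_zero_add_max_sub_zero_le {γ t : ℝ} (a : ℝ) (hγ0 : 0 ≤ γ) (hγ1 : γ ≤ 1)
    (ht : 0 ≤ t) :
    max (a + t) 0 + max (a - t) 0 ≤ 2 * max (a + γ * t) 0 + (1 - γ) * t := by
  have hplus : max (a + t) 0 ≤ max (a + γ * t) 0 + (1 - γ) * t := by
    have := max_add_zero_le_max_zero_add (a + γ * t) (mul_nonneg (sub_nonneg.mpr hγ1) ht)
    rwa [show a + γ * t + (1 - γ) * t = a + t by ring] at this
  have hminus : max (a - t) 0 ≤ max (a + γ * t) 0 :=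
    max_le_max_right 0 (by nlinarith)
  linarith

lemma gamma_mul_add_eq_sub {σlo σhi : ℝ} (hlo : σlo ≠ 0) (hsum : σhi + σlo ≠ 0) :
    (σhi / σlo - 1) / (σhi / σlo + 1) * (σhi + σlo) = σhi - σlo := by
  field_simp

/-- For `0 < σ̲² ≤ σ̄²`, `G(a) = (1/2)(σ̄²·a⁺ − σ̲²·a⁻)`,
`β = σ̄²/σ̲²` and `γ = (β−1)/(β+1)`, one has
`G(a + γ·|α|) ≥ (1/2)(G(a+α) + G(a−α))` for all `a, α ∈ ℝ`. -/
theorem G_gamma_upper_bound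
    (σlo σhi : ℝ) (h0 : 0 < σlo) (hle : σlo ≤ σhi)
    (G : ℝ → ℝ) (hG : ∀ a : ℝ, G a = (1 / 2) * (σhi * max a 0 - σlo * max (-a) 0))
    (β γ : ℝ) (hβ : β = σhi / σlo) (hγ : γ = (β - 1) / (β + 1)) :
    ∀ a α : ℝ, (1 / 2) * (G (a + α) + G (a - α)) ≤ G (a + γ * |α|) := by
  intro a α
  have hγm : γ * (σhi + σlo) = σhi - σlo := by
    rw [hγ, hβ]; exact gamma_mul_add_eq_sub h0.ne' (by linarith)
  have hγ0 : 0 ≤ γ := by nlinarith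
  have hγ1 : γ ≤ 1 := by nlinarith
  have hkey := mul_le_mul_of_nonneg_left
    (max_add_zero_add_max_sub_zero_le a hγ0 hγ1 (abs_nonneg α)) (sub_nonneg.mpr hle)
  rw [← max_add_zero_add_max_sub_zero_abs] at hkey
  simp only [hG, max_neg_zero_eq_max_zero_sub]
  linear_combination hkey / 4 - |α| / 4 * hγm
end

section
/- Let 0 ≤ σ̲² ≤ σ̄² be real numbers, define G : ℝ → ℝ by G(a) = (1/2)(σ̄²·a⁺ − σ̲²·a⁻), and for ε ∈ [0, (σ̄² − σ̲²)/2] define G_ε(a) = (1/2)((σ̄² − ε)·a⁺ − (σ̲² + ε)·a⁻). Then for all a, α ∈ ℝ, (1/2)·(G(a+α) + G(a−α)) ≥ G_ε(a) + (1/2)·ε·|α|. -/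
/-- For `0 ≤ σ̲² ≤ σ̄²`, `G(a) = (1/2)(σ̄²·a⁺ − σ̲²·a⁻)`, and
`G_ε(a) = (1/2)((σ̄²−ε)·a⁺ − (σ̲²+ε)·a⁻)` with `ε ∈ [0, (σ̄²−σ̲²)/2]`, one has
`(1/2)(G(a+α) + G(a−α)) ≥ G_ε(a) + (1/2)·ε·|α|` for all `a, α ∈ ℝ`. -/
theorem G_epsilon_lower_bound
    (σlo σhi : ℝ) (h0 : 0 ≤ σlo) (hle : σlo ≤ σhi)
    (G : ℝ → ℝ) (hG : ∀ a : ℝ, G a = (1 / 2) * (σhi * max a 0 - σlo * max (-a) 0))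
    (ε : ℝ) (hε0 : 0 ≤ ε) (hε1 : ε ≤ (σhi - σlo) / 2)
    (Gε : ℝ → ℝ)
    (hGε : ∀ a : ℝ, Gε a = (1 / 2) * ((σhi - ε) * max a 0 - (σlo + ε) * max (-a) 0)) :
    ∀ a α : ℝ, Gε a + (1 / 2) * ε * |α| ≤ (1 / 2) * (G (a + α) + G (a - α)) := by
  intro a α
  have key : ∀ x : ℝ, max x 0 = (x + |x|) / 2 := by
    intro x; rcases abs_cases x with ⟨h, h'⟩ | ⟨h, h'⟩
    · rw [max_eq_left h', h]; ring
    · rw [max_eq_right (le_of_lt h'), h]; ring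
  have key2 : ∀ x : ℝ, max (-x) 0 = (|x| - x) / 2 := by
    intro x; rw [key, abs_neg]; ring
  have hA : 2 * |a| ≤ |a + α| + |a - α| := by
    have := abs_add_le (a + α) (a - α)
    have h2 : |2 * a| = 2 * |a| := by rw [abs_mul]; simp
    calc 2 * |a| = |(a + α) + (a - α)| := by rw [show (a+α)+(a-α) = 2*a by ring, h2]
    _ ≤ |a + α| + |a - α| := this
  have hB : 2 * |α| ≤ |a + α| + |a - α| := by
    have := abs_sub (a + α) (a - α)
    have h2 : |2 * α| = 2 * |α| := by rw [abs_mul]; simp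
    calc 2 * |α| = |(a + α) - (a - α)| := by rw [show (a+α)-(a-α) = 2*α by ring, h2]
    _ ≤ |a + α| + |a - α| := this
  rw [hG, hG, hGε, key (a + α), key (a - α), key a, key2 (a + α), key2 (a - α), key2 a]
  nlinarith [mul_nonneg (by linarith : (0:ℝ) ≤ σhi - σlo - 2*ε)
      (by linarith : (0:ℝ) ≤ |a + α| + |a - α| - 2*|a|),
    mul_nonneg hε0 (by linarith : (0:ℝ) ≤ |a + α| + |a - α| - 2*|α|)]
end

section
/- Let Ω be a set and let 𝔼 : (Ω → ℝ) → ℝ be a sublinear expectation, i.e. 𝔼 satisfies: (monotonicity) if f(ω) ≤ g(ω) for all ω then 𝔼[f] ≤ 𝔼[g]; (subadditivity) 𝔼[f+g] ≤ 𝔼[f] + 𝔼[g]; (positive homogeneity) 𝔼[λ·f] = λ·𝔼[f] for all λ ≥ 0. Then for every real p ≥ 1 and all f, g : Ω → ℝ, the Minkowski inequality holds: (𝔼[|f+g|^p])^{1/p} ≤ (𝔼[|f|^p])^{1/p} + (𝔼[|g|^p])^{1/p}. In particular ‖f‖ := (𝔼[|f|^p])^{1/p} satisfies the triangle inequality. 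-/
/-!
For `α, β > 0`, convexity of `t ↦ t ^ p` at the point `x + y = (α/(α+β)) ((α+β)/α) x + (β/(α+β)) ((α+β)/β) y`
gives `(x + y) ^ p ≤ ((α+β)/α) ^ (p-1) x ^ p + ((α+β)/β) ^ (p-1) y ^ p`. Applied to `|f|, |g|` and pushed
through `𝔼` by monotonicity, subadditivity and positive homogeneity, this yields `𝔼|f+g|^p ≤ (α+β)^p`
as soon as `𝔼|f|^p ≤ α^p` and `𝔼|g|^p ≤ β^p`. Taking `α, β` to be the `p`-norms of `f, g` plus `ε/2`
(they must be positive, while the norms may vanish) and letting `ε → 0` gives the inequality.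
-/

open Real

theorem rpow_add_le_weighted {p x y α β : ℝ} (hp : 1 ≤ p) (hx : 0 ≤ x) (hy : 0 ≤ y)
    (hα : 0 < α) (hβ : 0 < β) :
    (x + y) ^ p ≤ ((α + β) / α) ^ (p - 1) * x ^ p + ((α + β) / β) ^ (p - 1) * y ^ p := by
  calc (x + y) ^ p
      = (α / (α + β) * (x * ((α + β) / α)) + β / (α + β) * (y * ((α + β) / β))) ^ p := by
        congr 1; field_simp
    _ ≤ α / (α + β) * (x * ((α + β) / α)) ^ p + β / (α + β) * (y * ((α + β) / β)) ^ p :=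
        (convexOn_rpow hp).2 (Set.mem_Ici.2 (by positivity)) (Set.mem_Ici.2 (by positivity))
          (by positivity) (by positivity) (by field_simp)
    _ = ((α + β) / α) ^ (p - 1) * x ^ p + ((α + β) / β) ^ (p - 1) * y ^ p := by
        rw [mul_rpow hx (by positivity), mul_rpow hy (by positivity),
          rpow_sub_one (by positivity), rpow_sub_one (by positivity)]
        field_simp

namespace SublinearExpectation

variable {Ω : Type*} {E : (Ω → ℝ) → ℝ}

theorem map_zero (hpos : ∀ (l : ℝ) (f : Ω → ℝ), 0 ≤ l → E (l • f) = l * E f) : E 0 = 0 := by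
  simpa using hpos 0 0 le_rfl

theorem nonneg (hmono : Monotone E)
    (hpos : ∀ (l : ℝ) (f : Ω → ℝ), 0 ≤ l → E (l • f) = l * E f) {f : Ω → ℝ} (hf : 0 ≤ f) :
    0 ≤ E f :=
  map_zero hpos ▸ hmono hf

theorem smul_add_smul_le (hsub : ∀ f g : Ω → ℝ, E (f + g) ≤ E f + E g)
    (hpos : ∀ (l : ℝ) (f : Ω → ℝ), 0 ≤ l → E (l • f) = l * E f) {s t : ℝ} (hs : 0 ≤ s)
    (ht : 0 ≤ t) (f g : Ω → ℝ) : E (s • f + t • g) ≤ s * E f + t * E g :=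
  (hsub _ _).trans_eq <| by rw [hpos s f hs, hpos t g ht]

theorem rpow_abs_add_le (hmono : Monotone E) (hsub : ∀ f g : Ω → ℝ, E (f + g) ≤ E f + E g)
    (hpos : ∀ (l : ℝ) (f : Ω → ℝ), 0 ≤ l → E (l • f) = l * E f) {p α β : ℝ} (hp : 1 ≤ p)
    (hα : 0 < α) (hβ : 0 < β) {f g : Ω → ℝ} (hf : E (fun ω => |f ω| ^ p) ≤ α ^ p)
    (hg : E (fun ω => |g ω| ^ p) ≤ β ^ p) :
    E (fun ω => |f ω + g ω| ^ p) ≤ (α + β) ^ p := by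
  set s := ((α + β) / α) ^ (p - 1)
  set t := ((α + β) / β) ^ (p - 1)
  have hs : 0 ≤ s := by positivity
  have ht : 0 ≤ t := by positivity
  calc E (fun ω => |f ω + g ω| ^ p)
      ≤ E (s • (fun ω => |f ω| ^ p) + t • (fun ω => |g ω| ^ p)) := hmono fun ω =>
        (rpow_le_rpow (abs_nonneg _) (abs_add_le _ _) (by linarith)).trans
          (rpow_add_le_weighted hp (abs_nonneg _) (abs_nonneg _) hα hβ)
    _ ≤ s * α ^ p + t * β ^ p :=
        (smul_add_smul_le hsub hpos hs ht _ _).trans (by gcongr)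
    _ = (α + β) ^ p := by
        simp only [s, t]
        rw [div_rpow (by positivity) hα.le, div_rpow (by positivity) hβ.le,
          rpow_sub_one hα.ne', rpow_sub_one hβ.ne', rpow_sub_one (by positivity)]
        field_simp

end SublinearExpectation

/-- Minkowski's inequality for a sublinear expectation: if
`𝔼 : (Ω → ℝ) → ℝ` is monotone, subadditive and positively homogeneous, then for
every `p ≥ 1` and all `f, g : Ω → ℝ`,
`(𝔼[|f+g|^p])^(1/p) ≤ (𝔼[|f|^p])^(1/p) + (𝔼[|g|^p])^(1/p)`. -/
theorem sublinear_expectation_minkowski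
    {Ω : Type*} (E : (Ω → ℝ) → ℝ)
    (hmono : ∀ f g : Ω → ℝ, (∀ ω, f ω ≤ g ω) → E f ≤ E g)
    (hsub : ∀ f g : Ω → ℝ, E (fun ω => f ω + g ω) ≤ E f + E g)
    (hpos : ∀ (l : ℝ) (f : Ω → ℝ), 0 ≤ l → E (fun ω => l * f ω) = l * E f)
    (p : ℝ) (hp : 1 ≤ p) (f g : Ω → ℝ) :
    (E (fun ω => |f ω + g ω| ^ p)) ^ (1 / p) ≤
      (E (fun ω => |f ω| ^ p)) ^ (1 / p) + (E (fun ω => |g ω| ^ p)) ^ (1 / p) := by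
  have hp0 : 0 < p := by linarith
  have hmono' : Monotone E := fun f g hfg => hmono f g hfg
  have hE (h : Ω → ℝ) : 0 ≤ E (fun ω => |h ω| ^ p) :=
    SublinearExpectation.nonneg hmono' hpos fun ω => by positivity
  have hnorm_le (h : Ω → ℝ) {ε : ℝ} (hε : 0 < ε) :
      E (fun ω => |h ω| ^ p) ≤ ((E (fun ω => |h ω| ^ p)) ^ p⁻¹ + ε) ^ p := by
    rw [← rpow_inv_le_iff_of_pos (hE h) (add_nonneg (rpow_nonneg (hE h) _) hε.le) hp0]
    linarith
  refine le_of_forall_pos_le_add fun ε hε => ?_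
  rw [one_div, rpow_inv_le_iff_of_pos (hE _)
    (by linarith [rpow_nonneg (hE f) p⁻¹, rpow_nonneg (hE g) p⁻¹]) hp0]
  convert SublinearExpectation.rpow_abs_add_le hmono' hsub hpos hp
    (by linarith [rpow_nonneg (hE f) p⁻¹]) (by linarith [rpow_nonneg (hE g) p⁻¹])
    (hnorm_le f (half_pos hε)) (hnorm_le g (half_pos hε)) using 2
  ring
end
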